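/- (Quarter-period K shift in intrinsic form.) Let k ∈ ℂ, let (S, C, D) be a Jacobi triple with modulus k, and let β ∈ ℂ with β² = 1 − k. On the open set U = { z ∈ ℂ : D(z) ≠ 0 }, the triple (z ↦ C(z)/D(z), z ↦ −β·S(z)/D(z), z ↦ β/D(z)) satisfies system (1) with the same modulus k. (This corresponds to sn(x+K|k) = cd(x|k), cn(x+K|k) = −√(1−k) sd(x|k), dn(x+K|k) = √(1−k) nd(x|k).) -/

import Mathlib

/-
After clearing the denominator `D²`, both quadratic relations of the shifted triple reduce to
those of `(S, C, D)`. The derivative of `C/D` is `-(1 - k) S / D²` because `D² - k C² = 1 - k`,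
and since `β² = 1 - k` this equals `(-β S / D) · (β / D)`.
-/

/-- A Jacobi triple with modulus `k`: the model is `(sn(·|k), cn(·|k), dn(·|k))`. -/
def IsJacobiTriple (k : ℂ) (S C D : ℂ → ℂ) : Prop :=
  ∀ z : ℂ, HasDerivAt S (C z * D z) z ∧ HasDerivAt C (-(S z * D z)) z ∧
    HasDerivAt D (-(k * S z * C z)) z ∧
    S z ^ 2 + C z ^ 2 = 1 ∧ D z ^ 2 + k * S z ^ 2 = 1

/-- A triple `(St, Ct, Dt)` satisfies system (1) with modulus `m` on `U`:
at every point of `U` the functions are differentiable with `St′ = Ct·Dt`,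
and `St² + Ct² = 1` and `Dt² + m·St² = 1` hold on `U`. -/
def SatisfiesSystem1 (m : ℂ) (St Ct Dt : ℂ → ℂ) (U : Set ℂ) : Prop :=
  ∀ z ∈ U, HasDerivAt St (Ct z * Dt z) z ∧
    DifferentiableAt ℂ Ct z ∧ DifferentiableAt ℂ Dt z ∧
    St z ^ 2 + Ct z ^ 2 = 1 ∧ Dt z ^ 2 + m * St z ^ 2 = 1

namespace IsJacobiTriple

variable {k : ℂ} {S C D : ℂ → ℂ}

theorem sq_sub_mul_sq (h : IsJacobiTriple k S C D) (z : ℂ) :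
    D z ^ 2 - k * C z ^ 2 = 1 - k := by
  obtain ⟨-, -, -, hSC, hDS⟩ := h z
  linear_combination hDS - k * hSC

theorem sq_add_one_sub_mul_sq (h : IsJacobiTriple k S C D) (z : ℂ) :
    C z ^ 2 + (1 - k) * S z ^ 2 = D z ^ 2 := by
  obtain ⟨-, -, -, hSC, hDS⟩ := h z
  linear_combination hSC - hDS

theorem hasDerivAt_div (h : IsJacobiTriple k S C D) {z : ℂ} (hz : D z ≠ 0) :
    HasDerivAt (fun w => C w / D w) (-((1 - k) * S z / D z ^ 2)) z := by
  obtain ⟨-, hC, hD, -, -⟩ := h z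
  refine (hC.div hD hz).congr_deriv ?_
  rw [← h.sq_sub_mul_sq z]
  ring

end IsJacobiTriple

theorem stmt_11 (k : ℂ) (S C D : ℂ → ℂ) (hJ : IsJacobiTriple k S C D)
    (β : ℂ) (hβ : β ^ 2 = 1 - k) :
    SatisfiesSystem1 k
      (fun z => C z / D z)
      (fun z => -β * S z / D z)
      (fun z => β / D z)
      {z : ℂ | D z ≠ 0} := by
  intro z (hz : D z ≠ 0)
  obtain ⟨hS, -, hD, -, -⟩ := hJ z
  refine ⟨?_, ((hS.const_mul (-β)).div hD hz).differentiableAt,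
    ((hasDerivAt_const z β).div hD hz).differentiableAt, ?_, ?_⟩
  · refine (hJ.hasDerivAt_div hz).congr_deriv ?_
    rw [← hβ]
    ring
  · field_simp
    linear_combination hJ.sq_add_one_sub_mul_sq z + S z ^ 2 * hβ
  · field_simp
    linear_combination hβ - hJ.sq_sub_mul_sq z
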